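/- For every unit imaginary octonion p ∈ S⁶, every unit octonion x ∈ S⁷, every θ ∈ ℝ, and every v ∈ 𝕆 orthogonal to both 1 and p, one has (p(v·((cos θ·1 + sin θ·p)·x)))·conj((cos θ·1 + sin θ·p)·x) = (p(v·x))·conj(x). -/

import Mathlib

noncomputable section

open scoped RealInnerProductSpace

/-- The octonions `𝕆`, realized as the Cayley–Dickson double of the quaternions:
pairs of quaternions `a + I·b`, with the Euclidean (`ℓ²`) inner product space structure. -/
abbrev 𝕆 : Type := WithLp 2 ((Quaternion ℝ) × (Quaternion ℝ))

namespace Oct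

/-- The octonion `a + I·b` built from a pair of quaternions `(a, b)`. -/
def mkO (a b : Quaternion ℝ) : 𝕆 := (WithLp.equiv 2 ((Quaternion ℝ) × (Quaternion ℝ))).symm (a, b)

def fstO (x : 𝕆) : Quaternion ℝ := (WithLp.equiv 2 ((Quaternion ℝ) × (Quaternion ℝ)) x).1
def sndO (x : 𝕆) : Quaternion ℝ := (WithLp.equiv 2 ((Quaternion ℝ) × (Quaternion ℝ)) x).2

/-- Cayley–Dickson multiplication of octonions:
`(a + I·b)(c + I·d) = (ac − d·conj(b)) + I·(cb + conj(a)·d)`. -/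
def omul (x y : 𝕆) : 𝕆 :=
  mkO (fstO x * fstO y - sndO y * star (sndO x)) (fstO y * sndO x + star (fstO x) * sndO y)

/-- The octonion unit `1 = (1, 0)`. -/
def o1 : 𝕆 := mkO 1 0

/-- The octonion `i = (i, 0)`. -/
def oI : 𝕆 := mkO ⟨0, 1, 0, 0⟩ 0

/-- Octonion conjugation, `conj x = 2⟨x,1⟩·1 − x`. -/
def oconj (x : 𝕆) : 𝕆 := (2 * ⟪x, o1⟫) • o1 - x

/-- Powers of an octonion (unambiguous by power-associativity of `𝕆`). -/
def opow (x : 𝕆) : ℕ → 𝕆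
  | 0 => o1
  | n + 1 => omul x (opow x n)

/-- The unit sphere `S⁷ ⊆ 𝕆`. -/
def S7 : Set 𝕆 := {x | ‖x‖ = 1}

/-- The unit sphere `S⁶` of the imaginary octonions (unit octonions orthogonal to `1`). -/
def S6 : Set 𝕆 := {x | ‖x‖ = 1 ∧ ⟪x, o1⟫ = 0}

/-- The tangent space `T_pS⁶ = (span{1,p})^⊥ ⊆ 𝕆`. -/
def TpS (p : 𝕆) : Submodule ℝ 𝕆 := (Submodule.span ℝ {o1, p})ᗮ

/-- `ℝ⁶ = (span{1,i})^⊥ ⊆ 𝕆`. -/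
def R6 : Submodule ℝ 𝕆 := TpS oI

lemma oext {x y : 𝕆} (h1 : fstO x = fstO y) (h2 : sndO x = sndO y) : x = y :=
  (WithLp.equiv 2 ((Quaternion ℝ) × (Quaternion ℝ))).injective (Prod.ext h1 h2)

lemma fstO_mkO (a b : Quaternion ℝ) : fstO (mkO a b) = a := rfl
lemma sndO_mkO (a b : Quaternion ℝ) : sndO (mkO a b) = b := rfl
lemma fstO_add (x y : 𝕆) : fstO (x + y) = fstO x + fstO y := rfl
lemma sndO_add (x y : 𝕆) : sndO (x + y) = sndO x + sndO y := rfl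
lemma fstO_smul (r : ℝ) (x : 𝕆) : fstO (r • x) = r • fstO x := rfl
lemma sndO_smul (r : ℝ) (x : 𝕆) : sndO (r • x) = r • sndO x := rfl
lemma qstar_smul (r : ℝ) (q : Quaternion ℝ) : star (r • q) = r • star q := by simp

/-- Octonion multiplication as an `ℝ`-bilinear map. -/
def omulₗ : 𝕆 →ₗ[ℝ] 𝕆 →ₗ[ℝ] 𝕆 :=
  LinearMap.mk₂ ℝ omul
    (by
      intro x x' y
      apply oext <;>
        simp only [omul, fstO_mkO, sndO_mkO, fstO_add, sndO_add, star_add] <;> noncomm_ring)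
    (by
      intro r x y
      apply oext <;>
        simp only [omul, fstO_mkO, sndO_mkO, fstO_smul, sndO_smul, qstar_smul,
          smul_mul_assoc, mul_smul_comm, smul_sub, smul_add])
    (by
      intro x y y'
      apply oext <;>
        simp only [omul, fstO_mkO, sndO_mkO, fstO_add, sndO_add, star_add] <;> noncomm_ring)
    (by
      intro r x y
      apply oext <;>
        simp only [omul, fstO_mkO, sndO_mkO, fstO_smul, sndO_smul, qstar_smul,
          smul_mul_assoc, mul_smul_comm, smul_sub, smul_add])

/-- Octonion multiplication as a continuous bilinear map. -/
def omulL : 𝕆 →L[ℝ] 𝕆 →L[ℝ] 𝕆 :=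
  LinearMap.toContinuousLinearMap
    { toFun := fun x => LinearMap.toContinuousLinearMap (omulₗ x)
      map_add' := by
        intro x x'
        ext v
        simp
      map_smul' := by
        intro r x
        ext v
        simp }

lemma omulL_apply (x y : 𝕆) : omulL x y = omul x y := rfl

/-- The family `(u, Ju, v, Jv, w, Jw)` associated to `J : 𝕆 → 𝕆` and `u v w : 𝕆`. -/
def JFam (J : 𝕆 → 𝕆) (u v w : 𝕆) : Fin 6 → 𝕆 := ![u, J u, v, J v, w, J w]

/-- The family `f` is a basis of the subspace `V ⊆ 𝕆`. -/
def IsBasisFam (V : Submodule ℝ 𝕆) (f : Fin 6 → 𝕆) : Prop :=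
  LinearIndependent ℝ f ∧ Submodule.span ℝ (Set.range f) = V

/-- Two families are positively related if one is obtained from the other by a matrix of
positive determinant. -/
def PosRelated (f g : Fin 6 → 𝕆) : Prop :=
  ∃ M : Matrix (Fin 6) (Fin 6) ℝ, (∀ k, g k = ∑ l, M k l • f l) ∧ 0 < M.det

/-- `J` and `K` induce the same orientation on the 6-dimensional subspace `V ⊆ 𝕆`: any
basis of `V` of the form `(u, Ju, v, Jv, w, Jw)` is positively related to any basis of `V`
of the form `(u', Ku', v', Kv', w', Kw')`. -/
def SameOri (V : Submodule ℝ 𝕆) (J K : 𝕆 → 𝕆) : Prop :=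
  ∀ u v w u' v' w' : 𝕆, IsBasisFam V (JFam J u v w) → IsBasisFam V (JFam K u' v' w') →
    PosRelated (JFam K u' v' w') (JFam J u v w)

/-- `J` (a linear endomorphism of `𝕆`) restricts to an orthogonal complex structure on the
subspace `V ⊆ 𝕆`: it maps `V` to `V` isometrically, and squares to `-id` on `V`. -/
structure IsOCS (V : Submodule ℝ 𝕆) (J : 𝕆 →ₗ[ℝ] 𝕆) : Prop where
  mapsTo : ∀ v ∈ V, J v ∈ V
  norm : ∀ v ∈ V, ‖J v‖ = ‖v‖
  sq : ∀ v ∈ V, J (J v) = -v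

/-- A quaternion subalgebra of `𝕆`: a 4-dimensional real subalgebra containing `1`. -/
def IsQuatSubalg (A : Submodule ℝ 𝕆) : Prop :=
  o1 ∈ A ∧ (∀ a ∈ A, ∀ b ∈ A, omul a b ∈ A) ∧ Module.finrank ℝ A = 4

lemma inner_o1_o1 : ⟪o1, o1⟫ = 1 := by
  show (inner ℝ (mkO 1 0).fst (mkO 1 0).fst : ℝ) + inner ℝ (mkO 1 0).snd (mkO 1 0).snd = 1
  simp [mkO, Quaternion.inner_self]

lemma norm_o1 : ‖o1‖ = 1 := by
  rw [@norm_eq_sqrt_real_inner, inner_o1_o1, Real.sqrt_one]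

lemma inner_oI_oI : ⟪oI, oI⟫ = 1 := by
  show (inner ℝ (mkO ⟨0,1,0,0⟩ 0).fst (mkO ⟨0,1,0,0⟩ 0).fst : ℝ)
      + inner ℝ (mkO ⟨0,1,0,0⟩ 0).snd (mkO ⟨0,1,0,0⟩ 0).snd = 1
  simp [mkO, Quaternion.inner_self, Quaternion.normSq_def]
  erw [Quaternion.inner_self, Quaternion.normSq_def']; norm_num

lemma norm_oI : ‖oI‖ = 1 := by
  rw [@norm_eq_sqrt_real_inner, inner_oI_oI, Real.sqrt_one]

lemma inner_oI_o1 : ⟪oI, o1⟫ = 0 := by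
  show (inner ℝ (mkO ⟨0,1,0,0⟩ 0).fst (mkO 1 0).fst : ℝ)
      + inner ℝ (mkO ⟨0,1,0,0⟩ 0).snd (mkO 1 0).snd = 0
  simp [mkO, Quaternion.inner_def]
  erw [Quaternion.inner_def, star_one, mul_one]

lemma omul_one (x : 𝕆) : omul x o1 = x := by
  apply oext <;> simp [omul, o1, fstO_mkO, sndO_mkO]

lemma oconj_o1 : oconj o1 = o1 := by
  unfold oconj
  rw [inner_o1_o1, mul_one, two_smul]
  abel

/-- `1 ∈ S⁷`. -/
lemma o1_mem_S7 : o1 ∈ S7 := norm_o1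

/-- `i ∈ S⁶`. -/
lemma oI_mem_S6 : oI ∈ S6 := ⟨norm_oI, inner_oI_o1⟩

end Oct

/-!
Put `q = cos θ + sin θ·p`. Since `p` and `v` are imaginary and orthogonal, `p² = -1` and
`vp = -pv`, so left alternativity gives `p(v(qx)) = cos θ·p(vx) + sin θ·vx`, while
`conj(qx) = cos θ·x̄ - sin θ·x̄p`. In the expanded product, `(vx)x̄ = v` because `|x| = 1`, the
middle Moufang identity gives `(p(vx))(x̄p) = p(vp) = v`, and the cyclic symmetry of the
associator gives `(vx)(x̄p) = -(p(vx))x̄`. The two cross terms cancel and the remaining ones add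
up to `(cos²θ + sin²θ)·(p(vx))x̄`.
-/
namespace Oct

lemma fstO_o1 : fstO o1 = 1 := rfl
lemma fstO_neg (x : 𝕆) : fstO (-x) = -fstO x := rfl
lemma sndO_neg (x : 𝕆) : sndO (-x) = -sndO x := rfl
lemma fstO_sub (x y : 𝕆) : fstO (x - y) = fstO x - fstO y := rfl
lemma sndO_sub (x y : 𝕆) : sndO (x - y) = sndO x - sndO y := rfl

lemma omul_add_left (x x' y : 𝕆) : omul (x + x') y = omul x y + omul x' y :=
  omulₗ.map_add₂ x x' y

lemma omul_add_right (x y y' : 𝕆) : omul x (y + y') = omul x y + omul x y' :=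
  (omulₗ x).map_add y y'

lemma omul_sub_right (x y y' : 𝕆) : omul x (y - y') = omul x y - omul x y' :=
  (omulₗ x).map_sub y y'

lemma omul_neg_left (x y : 𝕆) : omul (-x) y = -omul x y :=
  omulₗ.map_neg₂ x y

lemma omul_neg_right (x y : 𝕆) : omul x (-y) = -omul x y :=
  (omulₗ x).map_neg y

lemma omul_smul_left (r : ℝ) (x y : 𝕆) : omul (r • x) y = r • omul x y :=
  omulₗ.map_smul₂ r x y

lemma omul_smul_right (r : ℝ) (x y : 𝕆) : omul x (r • y) = r • omul x y :=
  (omulₗ x).map_smul r y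

lemma one_omul (y : 𝕆) : omul o1 y = y := by
  apply oext <;> simp [omul, o1, fstO_mkO, sndO_mkO]

lemma inner_eq_re_mul_star (x y : 𝕆) :
    ⟪x, y⟫ = (fstO x * star (fstO y)).re + (sndO x * star (sndO y)).re :=
  congrArg₂ (· + ·) (Quaternion.inner_def _ _) (Quaternion.inner_def _ _)

lemma inner_o1_right (x : 𝕆) : ⟪x, o1⟫ = (fstO x).re := by
  rw [inner_eq_re_mul_star]
  simp [o1, fstO_mkO, sndO_mkO, Quaternion.re_zero]

lemma fstO_oconj (x : 𝕆) : fstO (oconj x) = star (fstO x) := by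
  unfold oconj
  rw [inner_o1_right, fstO_sub, fstO_smul, Quaternion.star_eq_two_re_sub, fstO_o1,
    ← Algebra.algebraMap_eq_smul_one]
  rfl

lemma sndO_oconj (x : 𝕆) : sndO (oconj x) = -sndO x := by
  simp [oconj, sndO_sub, sndO_smul, o1, sndO_mkO]

lemma oconj_add (x y : 𝕆) : oconj (x + y) = oconj x + oconj y := by
  unfold oconj
  rw [inner_add_left]
  module

lemma oconj_smul (r : ℝ) (x : 𝕆) : oconj (r • x) = r • oconj x := by
  unfold oconj
  rw [real_inner_smul_left]
  module

lemma oconj_of_inner_o1_eq_zero {x : 𝕆} (h : ⟪x, o1⟫ = 0) : oconj x = -x := by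
  simp [oconj, h]

lemma oconj_omul (x y : 𝕆) : oconj (omul x y) = omul (oconj y) (oconj x) := by
  apply oext
  · simp only [omul, fstO_mkO, fstO_oconj, sndO_oconj, star_sub, star_mul, star_star, star_neg,
      mul_neg, neg_mul, neg_neg]
  · simp only [omul, sndO_mkO, fstO_oconj, sndO_oconj, star_star, mul_neg, neg_mul]
    abel

set_option maxHeartbeats 1000000 in
lemma omul_omul_oconj (a x : 𝕆) : omul (omul a x) (oconj x) = ⟪x, x⟫ • a := by
  rw [inner_eq_re_mul_star]
  apply oext <;>
    simp only [omul, fstO_mkO, sndO_mkO, fstO_oconj, sndO_oconj, fstO_smul, sndO_smul,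
      star_sub, star_add, star_mul, star_star] <;>
    ext <;>
    simp only [Quaternion.re_mul, Quaternion.imI_mul, Quaternion.imJ_mul, Quaternion.imK_mul,
      Quaternion.re_add, Quaternion.imI_add, Quaternion.imJ_add, Quaternion.imK_add,
      Quaternion.re_sub, Quaternion.imI_sub, Quaternion.imJ_sub, Quaternion.imK_sub,
      Quaternion.re_neg, Quaternion.imI_neg, Quaternion.imJ_neg, Quaternion.imK_neg,
      Quaternion.re_star, Quaternion.imI_star, Quaternion.imJ_star, Quaternion.imK_star,
      Quaternion.re_smul, Quaternion.imI_smul, Quaternion.imJ_smul, Quaternion.imK_smul,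
      smul_eq_mul] <;>
    ring

set_option maxHeartbeats 1000000 in
lemma omul_add_omul_swap {p v : 𝕆} (hp : ⟪p, o1⟫ = 0) (hv : ⟪v, o1⟫ = 0) :
    omul p v + omul v p = (-2 * ⟪p, v⟫) • o1 := by
  rw [inner_o1_right] at hp hv
  rw [inner_eq_re_mul_star]
  apply oext <;>
    simp only [omul, fstO_mkO, sndO_mkO, fstO_add, sndO_add, fstO_smul, sndO_smul, o1] <;>
    ext <;>
    simp only [Quaternion.re_mul, Quaternion.imI_mul, Quaternion.imJ_mul, Quaternion.imK_mul,
      Quaternion.re_add, Quaternion.imI_add, Quaternion.imJ_add, Quaternion.imK_add,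
      Quaternion.re_sub, Quaternion.imI_sub, Quaternion.imJ_sub, Quaternion.imK_sub,
      Quaternion.re_star, Quaternion.imI_star, Quaternion.imJ_star, Quaternion.imK_star,
      Quaternion.re_smul, Quaternion.imI_smul, Quaternion.imJ_smul, Quaternion.imK_smul,
      Quaternion.re_one, Quaternion.imI_one, Quaternion.imJ_one, Quaternion.imK_one,
      Quaternion.re_zero, Quaternion.imI_zero, Quaternion.imJ_zero, Quaternion.imK_zero,
      smul_eq_mul, hp, hv] <;>
    ring


def oassoc (a b c : 𝕆) : 𝕆 := omul (omul a b) c - omul a (omul b c)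

set_option maxHeartbeats 1000000 in
lemma oassoc_swap_left (a b c : 𝕆) : oassoc b a c = -oassoc a b c := by
  apply oext <;>
    simp only [oassoc, omul, fstO_mkO, sndO_mkO, fstO_sub, sndO_sub, fstO_neg, sndO_neg,
      star_sub, star_add, star_mul, star_star] <;>
    ext <;>
    simp only [Quaternion.re_mul, Quaternion.imI_mul, Quaternion.imJ_mul, Quaternion.imK_mul,
      Quaternion.re_add, Quaternion.imI_add, Quaternion.imJ_add, Quaternion.imK_add,
      Quaternion.re_sub, Quaternion.imI_sub, Quaternion.imJ_sub, Quaternion.imK_sub,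
      Quaternion.re_neg, Quaternion.imI_neg, Quaternion.imJ_neg, Quaternion.imK_neg,
      Quaternion.re_star, Quaternion.imI_star, Quaternion.imJ_star, Quaternion.imK_star] <;>
    ring

set_option maxHeartbeats 1000000 in
lemma oassoc_cyclic (a b c : 𝕆) : oassoc a b c = oassoc b c a := by
  apply oext <;>
    simp only [oassoc, omul, fstO_mkO, sndO_mkO, fstO_sub, sndO_sub,
      star_sub, star_add, star_mul, star_star] <;>
    ext <;>
    simp only [Quaternion.re_mul, Quaternion.imI_mul, Quaternion.imJ_mul, Quaternion.imK_mul,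
      Quaternion.re_add, Quaternion.imI_add, Quaternion.imJ_add, Quaternion.imK_add,
      Quaternion.re_sub, Quaternion.imI_sub, Quaternion.imJ_sub, Quaternion.imK_sub,
      Quaternion.re_star, Quaternion.imI_star, Quaternion.imJ_star, Quaternion.imK_star] <;>
    ring

set_option maxHeartbeats 1000000 in
lemma omul_moufang_middle (a b c : 𝕆) :
    omul (omul a b) (omul c a) = omul a (omul (omul b c) a) := by
  apply oext <;>
    simp only [omul, fstO_mkO, sndO_mkO, star_sub, star_add, star_mul, star_star] <;>
    ext <;>
    simp only [Quaternion.re_mul, Quaternion.imI_mul, Quaternion.imJ_mul, Quaternion.imK_mul,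
      Quaternion.re_add, Quaternion.imI_add, Quaternion.imJ_add, Quaternion.imK_add,
      Quaternion.re_sub, Quaternion.imI_sub, Quaternion.imJ_sub, Quaternion.imK_sub,
      Quaternion.re_star, Quaternion.imI_star, Quaternion.imJ_star, Quaternion.imK_star] <;>
    ring

lemma omul_self_of_mem_S6 {p : 𝕆} (hp : p ∈ S6) : omul p p = -o1 := by
  have h := omul_add_omul_swap hp.2 hp.2
  rw [real_inner_self_eq_norm_sq, hp.1] at h
  linear_combination (norm := module) (1 / 2 : ℝ) • h

lemma omul_omul_self_of_mem_S6 {p : 𝕆} (hp : p ∈ S6) (w : 𝕆) : omul p (omul p w) = -w := by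
  have h := oassoc_swap_left p p w
  rw [oassoc, omul_self_of_mem_S6 hp, omul_neg_left, one_omul] at h
  linear_combination (norm := module) (-1 / 2 : ℝ) • h

lemma omul_omul_anticomm {p v : 𝕆} (hpv : omul p v + omul v p = 0) (w : 𝕆) :
    omul v (omul p w) = -omul p (omul v w) := by
  have h := oassoc_swap_left p v w
  rw [oassoc, oassoc, eq_neg_of_add_eq_zero_right hpv, omul_neg_left] at h
  linear_combination (norm := module) (-1 : ℝ) • h

lemma omul_omul_omul_smul_o1_add_smul {p v : 𝕆} (hp : p ∈ S6) (hpv : omul p v + omul v p = 0)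
    (c s : ℝ) (y : 𝕆) :
    omul p (omul v (omul (c • o1 + s • p) y)) = c • omul p (omul v y) + s • omul v y := by
  rw [omul_add_left, omul_smul_left, omul_smul_left, one_omul, omul_add_right, omul_smul_right,
    omul_smul_right, omul_omul_anticomm hpv, omul_add_right, omul_smul_right, omul_smul_right,
    omul_neg_right, omul_omul_self_of_mem_S6 hp]
  module

lemma oconj_omul_smul_o1_add_smul {p : 𝕆} (hp : ⟪p, o1⟫ = 0) (c s : ℝ) (y : 𝕆) :
    oconj (omul (c • o1 + s • p) y) = c • oconj y - s • omul (oconj y) p := by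
  rw [oconj_omul, oconj_add, oconj_smul, oconj_smul, oconj_o1, oconj_of_inner_o1_eq_zero hp,
    omul_add_right, omul_smul_right, omul_smul_right, omul_one, omul_neg_right]
  module

lemma omul_omul_oconj_of_norm_eq_one {x : 𝕆} (hx : ‖x‖ = 1) (a : 𝕆) :
    omul (omul a x) (oconj x) = a := by
  rw [omul_omul_oconj, real_inner_self_eq_norm_sq, hx, one_pow, one_smul]

lemma omul_omul_omul_oconj_omul {p v x : 𝕆} (hp : p ∈ S6) (hpv : omul p v + omul v p = 0)
    (hx : ‖x‖ = 1) : omul (omul p (omul v x)) (omul (oconj x) p) = v := by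
  rw [omul_moufang_middle, omul_omul_oconj_of_norm_eq_one hx, eq_neg_of_add_eq_zero_right hpv,
    omul_neg_right, omul_omul_self_of_mem_S6 hp, neg_neg]

lemma omul_omul_oconj_omul {p v x : 𝕆} (hpv : omul p v + omul v p = 0) (hx : ‖x‖ = 1) :
    omul (omul v x) (omul (oconj x) p) = -omul (omul p (omul v x)) (oconj x) := by
  have h := oassoc_cyclic p (omul v x) (oconj x)
  rw [oassoc, oassoc, omul_omul_oconj_of_norm_eq_one hx] at h
  linear_combination (norm := module) h + hpv

end Oct

open Oct in
/-- For `p ∈ S⁶`, a unit octonion `x`, `θ ∈ ℝ` and `v ⊥ 1, p`: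
`(p(v·((cos θ·1 + sin θ·p)x)))·conj((cos θ·1 + sin θ·p)x) = (p(v·x))·conj(x)`. -/
theorem acs_formula_circle_invariant (p : 𝕆) (hp : p ∈ S6) (x : 𝕆) (hx : ‖x‖ = 1)
    (θ : ℝ) (v : 𝕆) (hv1 : ⟪v, o1⟫ = 0) (hvp : ⟪v, p⟫ = 0) :
    omul (omul p (omul v (omul (Real.cos θ • o1 + Real.sin θ • p) x)))
        (oconj (omul (Real.cos θ • o1 + Real.sin θ • p) x)) =
      omul (omul p (omul v x)) (oconj x) := by
  have hpv : omul p v + omul v p = 0 := by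
    rw [omul_add_omul_swap hp.2 hv1, real_inner_comm, hvp, mul_zero, zero_smul]
  rw [omul_omul_omul_smul_o1_add_smul hp hpv, oconj_omul_smul_o1_add_smul hp.2]
  simp only [omul_add_left, omul_sub_right, omul_smul_left, omul_smul_right]
  rw [omul_omul_omul_oconj_omul hp hpv hx, omul_omul_oconj_omul hpv hx,
    omul_omul_oconj_of_norm_eq_one hx]
  linear_combination (norm := module) Real.cos_sq_add_sin_sq θ • omul (omul p (omul v x)) (oconj x)
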